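/- arXiv:2104.04512 — 6 statements merged into one kernel-verified Lean document; each statement's English description precedes it below -/
import Mathlib

section
/- The key-value counter program is consistent: specifically, (C1) for an increment event i(k), adding 1 to key k of the pointwise sum of two maps equals the pointwise sum after adding 1 to key k of the first map; (C2) joining the two states produced by forking a counter map (where fork sends each key's count entirely to one of the two sides) recovers the original map; (C3) any two increment events (of any keys) commute as state updates, and an increment of key k1 commutes with a read-reset of key k2 whenever k1 ≠ k2, with the outputs produced (the read values) also agreeing. -/
namespace KV

/-- Events: increment `inc k` or read-reset `rr k`, for integer keys. -/
inductive Ev : Type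
  | inc (k : ℤ)
  | rr (k : ℤ)

/-- State: a map from keys to counters (default value 0). -/
def St : Type := ℤ → ℤ

/-- `update s (inc k)` increments `s k`; `update s (rr k)` resets `s k` to 0. -/
def update (s : St) : Ev → St
  | .inc k => Function.update s k (s k + 1)
  | .rr k => Function.update s k 0

/-- Output: an increment outputs nothing; a read-reset outputs the counter. -/
def out (s : St) : Ev → List ℤ
  | .inc _ => []
  | .rr k => [s k]

/-- `join` is the pointwise sum of the two counter maps. -/
def join (s1 s2 : St) : St := fun k => s1 k + s2 k

/-- `fork` sends each key's count entirely to the side responsible for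
read-resets of that key: side 1 if `pred1` accepts `rr k`, else side 2. -/
def fork (s : St) (pred1 _pred2 : Ev → Bool) : St × St :=
  (fun k => if pred1 (.rr k) then s k else 0,
   fun k => if pred1 (.rr k) then 0 else s k)

theorem update_inc_apply (s : St) (k x : ℤ) :
    update s (.inc k) x = if x = k then s k + 1 else s x :=
  Function.update_apply (s : ℤ → ℤ) k _ x

theorem update_rr_apply (s : St) (k x : ℤ) :
    update s (.rr k) x = if x = k then 0 else s x :=
  Function.update_apply (s : ℤ → ℤ) k _ x

theorem join_update_inc (s1 s2 : St) (k : ℤ) :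
    join (update s1 (.inc k)) s2 = update (join s1 s2) (.inc k) := by
  funext x
  simp only [join, update_inc_apply]
  split_ifs with h
  · subst h; ring
  · rfl

theorem join_fork (s : St) (pred1 pred2 : Ev → Bool) :
    join (fork s pred1 pred2).1 (fork s pred1 pred2).2 = s := by
  funext k
  simp only [join, fork]
  split_ifs <;> simp

theorem update_inc_comm (s : St) (k1 k2 : ℤ) :
    update (update s (.inc k1)) (.inc k2) = update (update s (.inc k2)) (.inc k1) := by
  funext x
  simp only [update_inc_apply]
  split_ifs <;> grind

theorem update_inc_rr_comm (s : St) {k1 k2 : ℤ} (h : k1 ≠ k2) :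
    update (update s (.inc k1)) (.rr k2) = update (update s (.rr k2)) (.inc k1) := by
  funext x
  simp only [update_inc_apply, update_rr_apply]
  split_ifs <;> grind

theorem out_update_inc_rr (s : St) {k1 k2 : ℤ} (h : k1 ≠ k2) :
    out (update s (.inc k1)) (.rr k2) = out s (.rr k2) := by
  simp only [out, update_inc_apply, if_neg h.symm]

/-- **The key-value counter program is consistent**:
(C1) for increment events, join commutes with update (outputs agree trivially);
(C2) join ∘ fork = id;
(C3) any two increments commute, and an increment of `k1` commutes with a
read-reset of `k2` whenever `k1 ≠ k2`, with agreeing outputs. -/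
theorem kv_consistent :
    (∀ (s1 s2 : St) (k : ℤ),
      join (update s1 (.inc k)) s2 = update (join s1 s2) (.inc k) ∧
      out s1 (.inc k) = out (join s1 s2) (.inc k)) ∧
    (∀ (s : St) (pred1 pred2 : Ev → Bool),
      join (fork s pred1 pred2).1 (fork s pred1 pred2).2 = s) ∧
    (∀ (s : St) (k1 k2 : ℤ),
      update (update s (.inc k1)) (.inc k2) =
        update (update s (.inc k2)) (.inc k1) ∧
      out s (.inc k1) ++ out (update s (.inc k1)) (.inc k2) =
        out s (.inc k2) ++ out (update s (.inc k2)) (.inc k1)) ∧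
    (∀ (s : St) (k1 k2 : ℤ), k1 ≠ k2 →
      update (update s (.inc k1)) (.rr k2) =
        update (update s (.rr k2)) (.inc k1) ∧
      out s (.inc k1) ++ out (update s (.inc k1)) (.rr k2) =
        out s (.rr k2) ++ out (update s (.rr k2)) (.inc k1)) :=
  ⟨fun s1 s2 k => ⟨join_update_inc s1 s2 k, rfl⟩,
    join_fork,
    fun s k1 k2 => ⟨update_inc_comm s k1 k2, rfl⟩,
    fun s _ _ h => ⟨update_inc_rr_comm s h, by rw [out_update_inc_rr s h]; rfl⟩⟩

end KV
end

section
/- If consistency condition C3 holds (independent events commute as updates with agreeing outputs), then for any state s, any event e independent of every element of a list u (with all events satisfying the relevant predicate), folding update over u ++ [e] from s yields the same final state as folding over [e] ++ u, and the multisets of concatenated outputs agree. -/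
/-! Induct on `u`: pushing `e` one step to the left past the head `x` of `u` is
exactly one application of (C3) to the pair `e, x`. The outputs even agree as lists. -/

/-- Folding update over a list of events: final state. -/
def foldSt {State Event : Type*} (update : State → Event → State) :
    State → List Event → State
  | s, [] => s
  | s, e :: u => foldSt update (update s e) u

/-- Folding update over a list of events: concatenated outputs. -/
def foldOut {State Event Out : Type*} (update : State → Event → State)
    (out : State → Event → List Out) : State → List Event → List Out
  | _, [] => []
  | s, e :: u => out s e ++ foldOut update out (update s e) u

section Bubble

variable {State Event Out : Type*} (update : State → Event → State)
  (out : State → Event → List Out) {e : Event}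

theorem foldSt_append_singleton_eq_cons {u : List Event}
    (hstate : ∀ x ∈ u, ∀ s, update (update s e) x = update (update s x) e) (s : State) :
    foldSt update s (u ++ [e]) = foldSt update s (e :: u) := by
  induction u generalizing s with
  | nil => rfl
  | cons x u ih =>
    calc foldSt update (update s x) (u ++ [e])
        = foldSt update (update (update s x) e) u :=
          ih (fun y hy => hstate y (List.mem_cons_of_mem x hy)) _
      _ = foldSt update (update (update s e) x) u := by rw [hstate x List.mem_cons_self s]

theorem foldOut_append_singleton_eq_cons {u : List Event}
    (hstate : ∀ x ∈ u, ∀ s, update (update s e) x = update (update s x) e)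
    (hout : ∀ x ∈ u, ∀ s, out s e ++ out (update s e) x = out s x ++ out (update s x) e)
    (s : State) :
    foldOut update out s (u ++ [e]) = foldOut update out s (e :: u) := by
  induction u generalizing s with
  | nil => rfl
  | cons x u ih =>
    have ih' := ih (fun y hy => hstate y (List.mem_cons_of_mem x hy))
      (fun y hy => hout y (List.mem_cons_of_mem x hy)) (update s x)
    calc out s x ++ foldOut update out (update s x) (u ++ [e])
        = (out s x ++ out (update s x) e) ++ foldOut update out (update (update s x) e) u := by
          rw [ih', foldOut, List.append_assoc]
      _ = (out s e ++ out (update s e) x) ++ foldOut update out (update (update s e) x) u := by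
          rw [hout x List.mem_cons_self s, hstate x List.mem_cons_self s]
      _ = foldOut update out s (e :: x :: u) := by simp only [foldOut, List.append_assoc]

end Bubble

theorem bubble_independent_event_general {State Event Out : Type*}
    (update : State → Event → State) (out : State → Event → List Out)
    (indep : Event → Event → Prop)
    (pred : Event → Prop)
    (hC3 : ∀ (s : State) (e1 e2 : Event), indep e1 e2 → pred e1 → pred e2 →
      update (update s e1) e2 = update (update s e2) e1 ∧
      out s e1 ++ out (update s e1) e2 = out s e2 ++ out (update s e2) e1)
    (s : State) (e : Event) (u : List Event)
    (he : pred e) (hu : ∀ x ∈ u, pred x) (hind : ∀ x ∈ u, indep e x) :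
    foldSt update s (u ++ [e]) = foldSt update s (e :: u) ∧
    (foldOut update out s (u ++ [e]) : Multiset Out) =
      (foldOut update out s (e :: u) : Multiset Out) := by
  have hcomm x (hx : x ∈ u) s := hC3 s e x (hind x hx) he (hu x hx)
  exact ⟨foldSt_append_singleton_eq_cons update (fun x hx s => (hcomm x hx s).1) s,
    congrArg _ (foldOut_append_singleton_eq_cons update out
      (fun x hx s => (hcomm x hx s).1) (fun x hx s => (hcomm x hx s).2) s)⟩

/-- **Bubbling lemma**: under (C3), an event `e` that is independent of
every element of `u` (all events satisfying the relevant predicate) can be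
moved from the end of `u` to the front, preserving the final state and
the multiset of concatenated outputs. -/
theorem bubble_independent_event {State Event Out : Type*}
    (update : State → Event → State) (out : State → Event → List Out)
    (indep : Event → Event → Prop)
    (hsymm : ∀ e1 e2, indep e1 e2 → indep e2 e1)
    (pred : Event → Prop)
    (hC3 : ∀ (s : State) (e1 e2 : Event), indep e1 e2 → pred e1 → pred e2 →
      update (update s e1) e2 = update (update s e2) e1 ∧
      out s e1 ++ out (update s e1) e2 = out s e2 ++ out (update s e2) e1)
    (s : State) (e : Event) (u : List Event)
    (he : pred e) (hu : ∀ x ∈ u, pred x) (hind : ∀ x ∈ u, indep e x) :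
    foldSt update s (u ++ [e]) = foldSt update s (e :: u) ∧
    (foldOut update out s (u ++ [e]) : Multiset Out) =
      (foldOut update out s (e :: u) : Multiset Out) :=
  bubble_independent_event_general update out indep pred hC3 s e u he hu hind
end

section
/- Sequentialization of a parallel wire: if a DGS program satisfies C1 (for both components, by symmetry via a join commuting with updates on either side), C2 (join ∘ fork = id), and C3 (independent events commute), and a parallel composition wire (State,pred,s)=u/v=>(State,pred,s') is derived from sub-derivations on u1, u2 with outputs v1, v2 where the sub-derivations are already equivalent to sequential update-folds, then the final state s' equals fold update u' s for any interleaving u' of u1 and u2, and the multiset of v equals the multiset of outputs of that fold. -/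
/-- A DGS program: event and output types, finitely many state types
(indexed by `Ix`) each with a predicate on events, an initial state of
type `State i0` whose predicate is trivially true, per-state-type update
and output functions, a symmetric dependence relation on events, and
sets of fork and join parallelization primitives. -/
structure DGS where
  Event : Type
  Out : Type
  Ix : Type
  State : Ix → Type
  i0 : Ix
  pred : Ix → Event → Prop
  pred0 : ∀ e, pred i0 e
  init : State i0
  update : ∀ i, State i → Event → State i
  out : ∀ i, State i → Event → List Out
  depends : Event → Event → Prop
  depends_symm : ∀ e1 e2, depends e1 e2 → depends e2 e1
  ForkSet : ∀ i j k : Ix,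
    Set (State i → (Event → Prop) → (Event → Prop) → State j × State k)
  JoinSet : ∀ j k i : Ix, Set (State j → State k → State i)

namespace DGS

def indep (P : DGS) (e1 e2 : P.Event) : Prop := ¬ P.depends e1 e2

/-- `Inter l l1 l2` : the list `l` is an interleaving of `l1` and `l2`. -/
inductive Inter {α : Type*} : List α → List α → List α → Prop
  | nil : Inter [] [] []
  | left {a l l1 l2} : Inter l l1 l2 → Inter (a :: l) (a :: l1) l2
  | right {a l l1 l2} : Inter l l1 l2 → Inter (a :: l) l1 (a :: l2)

/-- The inductively defined DGS semantics on wires: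
`Sem P i pr s u s' v` means ⟨State_i, pr, s⟩ =u/v=> ⟨State_i, pr, s'⟩. -/
inductive Sem (P : DGS) :
    ∀ i : P.Ix, (P.Event → Prop) → P.State i → List P.Event →
      P.State i → List P.Out → Prop where
  | empty {i pr s} (hw : ∀ e, pr e → P.pred i e) :
      Sem P i pr s [] s []
  | single {i pr s e} (hw : ∀ e, pr e → P.pred i e) (he : pr e) :
      Sem P i pr s [e] (P.update i s e) (P.out i s e)
  | seq {i pr s s' s'' u u' v v'} :
      Sem P i pr s u s' v → Sem P i pr s' u' s'' v' →
      Sem P i pr s (u ++ u') s'' (v ++ v')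
  | par {i j k : P.Ix} {pr pred1 pred2 : P.Event → Prop} {s : P.State i}
      {s1' : P.State j} {s2' : P.State k}
      {u u1 u2 : List P.Event} {v v1 v2 : List P.Out}
      {fork : P.State i → (P.Event → Prop) → (P.Event → Prop) → P.State j × P.State k}
      {join : P.State j → P.State k → P.State i}
      (hfork : fork ∈ P.ForkSet i j k) (hjoin : join ∈ P.JoinSet j k i)
      (hind : ∀ e1 e2, pred1 e1 → pred2 e2 → P.indep e1 e2)
      (h1 : ∀ e, pred1 e → pr e) (h2 : ∀ e, pred2 e → pr e)
      (hw1 : ∀ e, pred1 e → P.pred j e) (hw2 : ∀ e, pred2 e → P.pred k e)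
      (hu : Inter u u1 u2) (hv : Inter v v1 v2)
      (d1 : Sem P j pred1 (fork s pred1 pred2).1 u1 s1' v1)
      (d2 : Sem P k pred2 (fork s pred1 pred2).2 u2 s2' v2) :
      Sem P i pr s u (join s1' s2') v

/-- Folding the update function over an input list: final state. -/
def foldSt (P : DGS) (i : P.Ix) : P.State i → List P.Event → P.State i
  | s, [] => s
  | s, e :: u => P.foldSt i (P.update i s e) u

/-- Folding the update function over an input list: concatenated outputs. -/
def foldOut (P : DGS) (i : P.Ix) : P.State i → List P.Event → List P.Out
  | _, [] => []
  | s, e :: u => P.out i s e ++ P.foldOut i (P.update i s e) u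


/-- (C1), left version: a join commutes with updates on the left
component, with equal outputs. -/
def C1L (P : DGS) : Prop :=
  ∀ (j k i : P.Ix) (join : P.State j → P.State k → P.State i),
    join ∈ P.JoinSet j k i →
    ∀ (e : P.Event), P.pred i e → P.pred j e →
    ∀ (s1 : P.State j) (s2 : P.State k),
      join (P.update j s1 e) s2 = P.update i (join s1 s2) e ∧
      P.out j s1 e = P.out i (join s1 s2) e

/-- (C1), right version (by symmetry): a join commutes with updates on
the right component, with equal outputs. -/
def C1R (P : DGS) : Prop :=
  ∀ (j k i : P.Ix) (join : P.State j → P.State k → P.State i),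
    join ∈ P.JoinSet j k i →
    ∀ (e : P.Event), P.pred i e → P.pred k e →
    ∀ (s1 : P.State j) (s2 : P.State k),
      join s1 (P.update k s2 e) = P.update i (join s1 s2) e ∧
      P.out k s2 e = P.out i (join s1 s2) e

/-- (C2): join ∘ fork = id. -/
def C2 (P : DGS) : Prop :=
  ∀ (i j k : P.Ix)
    (fork : P.State i → (P.Event → Prop) → (P.Event → Prop) → P.State j × P.State k),
    fork ∈ P.ForkSet i j k →
    ∀ (join : P.State j → P.State k → P.State i), join ∈ P.JoinSet j k i →
    ∀ (s : P.State i) (pred1 pred2 : P.Event → Prop),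
      join (fork s pred1 pred2).1 (fork s pred1 pred2).2 = s

/-- (C3): independent events commute, with agreeing outputs. -/
def C3 (P : DGS) : Prop :=
  ∀ (i : P.Ix) (s : P.State i) (e1 e2 : P.Event),
    P.indep e1 e2 → P.pred i e1 → P.pred i e2 →
      P.update i (P.update i s e1) e2 = P.update i (P.update i s e2) e1 ∧
      P.out i s e1 ++ P.out i (P.update i s e1) e2 =
        P.out i s e2 ++ P.out i (P.update i s e2) e1

/-! By C1, an update of either component commutes with the join, so folding over any
interleaving of `u1` and `u2` from `join t1 t2` is the join of the two separate folds, with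
the outputs merged. Starting from `fork s`, C2 collapses `join (fork s).1 (fork s).2` back to
`s`. -/

theorem Inter.perm_append {α : Type*} {l l1 l2 : List α} (h : Inter l l1 l2) :
    l.Perm (l1 ++ l2) := by
  induction h with
  | nil => rfl
  | left _ ih => exact ih.cons _
  | right _ ih => exact (ih.cons _).trans List.perm_middle.symm

theorem Inter.coe_eq_add {α : Type*} {l l1 l2 : List α} (h : Inter l l1 l2) :
    (l : Multiset α) = l1 + l2 := by
  rw [Multiset.coe_add, Multiset.coe_eq_coe]
  exact h.perm_append

theorem Sem.pred_of_mem {P : DGS} {i pr s u s' v} (d : Sem P i pr s u s' v) :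
    ∀ e ∈ u, pr e := by
  induction d with
  | empty _ => simp
  | single _ he => simpa using he
  | seq _ _ ih1 ih2 =>
    intro e he
    exact (List.mem_append.1 he).elim (ih1 e) (ih2 e)
  | par _ _ _ h1 h2 _ _ hu _ _ _ ih1 ih2 =>
    intro e he
    exact (List.mem_append.1 (hu.perm_append.mem_iff.1 he)).elim
      (fun h => h1 e (ih1 e h)) (fun h => h2 e (ih2 e h))

section JoinFold

variable {P : DGS} {i j k : P.Ix} {join : P.State j → P.State k → P.State i}

theorem foldSt_join (hC1 : P.C1L) (hC1r : P.C1R) (hjoin : join ∈ P.JoinSet j k i)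
    {u u1 u2 : List P.Event} (hu : Inter u u1 u2)
    (hp1 : ∀ e ∈ u1, P.pred i e ∧ P.pred j e) (hp2 : ∀ e ∈ u2, P.pred i e ∧ P.pred k e)
    (t1 : P.State j) (t2 : P.State k) :
    P.foldSt i (join t1 t2) u = join (P.foldSt j t1 u1) (P.foldSt k t2 u2) := by
  induction hu generalizing t1 t2 with
  | nil => rfl
  | @left a _ _ _ _ ih =>
    obtain ⟨hai, haj⟩ := hp1 a List.mem_cons_self
    rw [foldSt, ← (hC1 j k i join hjoin a hai haj t1 t2).1]
    exact ih (fun e he => hp1 e (List.mem_cons_of_mem _ he)) hp2 _ _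
  | @right a _ _ _ _ ih =>
    obtain ⟨hai, hak⟩ := hp2 a List.mem_cons_self
    rw [foldSt, ← (hC1r j k i join hjoin a hai hak t1 t2).1]
    exact ih hp1 (fun e he => hp2 e (List.mem_cons_of_mem _ he)) _ _

theorem foldOut_join (hC1 : P.C1L) (hC1r : P.C1R) (hjoin : join ∈ P.JoinSet j k i)
    {u u1 u2 : List P.Event} (hu : Inter u u1 u2)
    (hp1 : ∀ e ∈ u1, P.pred i e ∧ P.pred j e) (hp2 : ∀ e ∈ u2, P.pred i e ∧ P.pred k e)
    (t1 : P.State j) (t2 : P.State k) :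
    (P.foldOut i (join t1 t2) u : Multiset P.Out) = P.foldOut j t1 u1 + P.foldOut k t2 u2 := by
  induction hu generalizing t1 t2 with
  | nil => rfl
  | @left a _ _ _ _ ih =>
    obtain ⟨hai, haj⟩ := hp1 a List.mem_cons_self
    obtain ⟨hupd, hout⟩ := hC1 j k i join hjoin a hai haj t1 t2
    rw [foldOut, foldOut, ← hupd, ← hout, ← Multiset.coe_add, ← Multiset.coe_add,
      ih (fun e he => hp1 e (List.mem_cons_of_mem _ he)) hp2, add_assoc]
  | @right a _ _ _ _ ih =>
    obtain ⟨hai, hak⟩ := hp2 a List.mem_cons_self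
    obtain ⟨hupd, hout⟩ := hC1r j k i join hjoin a hai hak t1 t2
    rw [foldOut, foldOut, ← hupd, ← hout, ← Multiset.coe_add, ← Multiset.coe_add,
      ih hp1 (fun e he => hp2 e (List.mem_cons_of_mem _ he)), add_left_comm]

end JoinFold

theorem parallel_wire_sequentialization_general (P : DGS)
    (hC1 : P.C1L) (hC1r : P.C1R) (hC2 : P.C2)
    {i j k : P.Ix} {pr pred1 pred2 : P.Event → Prop} {s : P.State i}
    {s1' : P.State j} {s2' : P.State k}
    {u1 u2 : List P.Event} {v v1 v2 : List P.Out}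
    {fork : P.State i → (P.Event → Prop) → (P.Event → Prop) → P.State j × P.State k}
    {join : P.State j → P.State k → P.State i}
    (hfork : fork ∈ P.ForkSet i j k) (hjoin : join ∈ P.JoinSet j k i)
    (h1 : ∀ e, pred1 e → pr e) (h2 : ∀ e, pred2 e → pr e)
    (hw : ∀ e, pr e → P.pred i e)
    (hw1 : ∀ e, pred1 e → P.pred j e) (hw2 : ∀ e, pred2 e → P.pred k e)
    (hv : Inter v v1 v2)
    (d1 : Sem P j pred1 (fork s pred1 pred2).1 u1 s1' v1)
    (d2 : Sem P k pred2 (fork s pred1 pred2).2 u2 s2' v2)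
    (ih1 : s1' = P.foldSt j (fork s pred1 pred2).1 u1 ∧
           v1 = P.foldOut j (fork s pred1 pred2).1 u1)
    (ih2 : s2' = P.foldSt k (fork s pred1 pred2).2 u2 ∧
           v2 = P.foldOut k (fork s pred1 pred2).2 u2) :
    ∀ u' : List P.Event, Inter u' u1 u2 →
      join s1' s2' = P.foldSt i s u' ∧
      (v : Multiset P.Out) = (P.foldOut i s u' : Multiset P.Out) := by
  intro u' hu'
  obtain ⟨rfl, rfl⟩ := ih1
  obtain ⟨rfl, rfl⟩ := ih2
  have hp1 : ∀ e ∈ u1, P.pred i e ∧ P.pred j e := fun e he =>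
    ⟨hw e (h1 e (d1.pred_of_mem e he)), hw1 e (d1.pred_of_mem e he)⟩
  have hp2 : ∀ e ∈ u2, P.pred i e ∧ P.pred k e := fun e he =>
    ⟨hw e (h2 e (d2.pred_of_mem e he)), hw2 e (d2.pred_of_mem e he)⟩
  have hjoin_fork := hC2 i j k fork hfork join hjoin s pred1 pred2
  constructor
  · rw [← foldSt_join hC1 hC1r hjoin hu' hp1 hp2, hjoin_fork]
  · rw [hv.coe_eq_add, ← foldOut_join hC1 hC1r hjoin hu' hp1 hp2, hjoin_fork]

/-- **Sequentialization of a parallel wire** (the parallel inductive step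
of "consistency implies determinism"): under C1 (both sides), C2 and C3,
if the two sub-derivations of a parallel composition are already
equivalent to sequential folds, then the final state of the parallel wire
equals the fold of updates over any interleaving `u'` of `u1` and `u2`,
and the multiset of outputs `v` equals the multiset of outputs of that fold. -/
theorem parallel_wire_sequentialization (P : DGS)
    (hC1 : P.C1L) (hC1r : P.C1R) (hC2 : P.C2) (hC3 : P.C3)
    {i j k : P.Ix} {pr pred1 pred2 : P.Event → Prop} {s : P.State i}
    {s1' : P.State j} {s2' : P.State k}
    {u u1 u2 : List P.Event} {v v1 v2 : List P.Out}
    {fork : P.State i → (P.Event → Prop) → (P.Event → Prop) → P.State j × P.State k}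
    {join : P.State j → P.State k → P.State i}
    (hfork : fork ∈ P.ForkSet i j k) (hjoin : join ∈ P.JoinSet j k i)
    (hind : ∀ e1 e2, pred1 e1 → pred2 e2 → P.indep e1 e2)
    (h1 : ∀ e, pred1 e → pr e) (h2 : ∀ e, pred2 e → pr e)
    (hw : ∀ e, pr e → P.pred i e)
    (hw1 : ∀ e, pred1 e → P.pred j e) (hw2 : ∀ e, pred2 e → P.pred k e)
    (hu : Inter u u1 u2) (hv : Inter v v1 v2)
    (d1 : Sem P j pred1 (fork s pred1 pred2).1 u1 s1' v1)
    (d2 : Sem P k pred2 (fork s pred1 pred2).2 u2 s2' v2)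
    (ih1 : s1' = P.foldSt j (fork s pred1 pred2).1 u1 ∧
           v1 = P.foldOut j (fork s pred1 pred2).1 u1)
    (ih2 : s2' = P.foldSt k (fork s pred1 pred2).2 u2 ∧
           v2 = P.foldOut k (fork s pred1 pred2).2 u2) :
    ∀ u' : List P.Event, Inter u' u1 u2 →
      join s1' s2' = P.foldSt i s u' ∧
      (v : Multiset P.Out) = (P.foldOut i s u' : Multiset P.Out) :=
  parallel_wire_sequentialization_general P hC1 hC1r hC2 hfork hjoin h1 h2 hw hw1 hw2 hv d1 d2 ih1
    ih2

end DGS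
end

section
/- A dependence-preserving reordering preserves the subsequence of events of any fixed tag: if m ∈ reorder_D(u), where reorder_D is the set of permutations of the list u that preserve the relative order of every pair of D-dependent events, and the dependence relation D relates every pair of events with the same tag, then for each tag σ, filtering m to events of tag σ yields exactly the same list as filtering u to events of tag σ. -/
/-! Events of one tag are pairwise dependent, so it is enough to treat a predicate `p`
whose elements are pairwise dependent. A filtered list is read off the increasing list
of positions at which `p` holds, so it suffices to show that the position bijection maps
the `p`-positions of `u`, in increasing order, to the `p`-positions of `m`, in increasing
order. Both lists are duplicate-free with the same members, and the first stays
increasing under the bijection because any two `p`-elements are dependent. -/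

/-- `reorderD D u m` : `m` is a dependence-preserving reordering of `u`,
i.e. there is a position bijection between `u` and `m` preserving elements
and preserving the relative order of every `D`-related pair of occurrences. -/
def reorderD {α : Type*} (D : α → α → Prop) (u m : List α) : Prop :=
  ∃ f : Fin u.length ≃ Fin m.length,
    (∀ i : Fin u.length, m.get (f i) = u.get i) ∧
    ∀ i j : Fin u.length, (i : ℕ) < (j : ℕ) → D (u.get i) (u.get j) →
      ((f i : ℕ) < (f j : ℕ))

theorem List.filter_eq_map_get_filter_finRange {α : Type*} (l : List α) (p : α → Bool) :
    l.filter p = ((List.finRange l.length).filter (p ∘ l.get)).map l.get := by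
  conv_lhs => rw [← List.map_get_finRange l]
  rw [List.filter_map]

section positions

variable {α : Type*} {u m : List α} (f : Fin u.length ≃ Fin m.length)

theorem filter_finRange_perm_map_of_get_apply (hf : ∀ i, m.get (f i) = u.get i)
    (p : α → Bool) :
    ((List.finRange m.length).filter (p ∘ m.get)).Perm
      (((List.finRange u.length).filter (p ∘ u.get)).map f) := by
  rw [List.perm_ext_iff_of_nodup ((List.nodup_finRange _).filter _)
    (((List.nodup_finRange _).filter _).map f.injective)]
  intro j
  simp only [List.mem_filter, List.mem_finRange, true_and, List.mem_map, Function.comp_apply]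
  constructor
  · intro hj
    exact ⟨f.symm j, by rwa [← hf, f.apply_symm_apply], f.apply_symm_apply j⟩
  · rintro ⟨i, hi, rfl⟩
    rwa [hf]

theorem filter_finRange_eq_map_of_get_apply (hf : ∀ i, m.get (f i) = u.get i)
    (p : α → Bool) (hmono : ∀ i j, i < j → p (u.get i) → p (u.get j) → f i < f j) :
    (List.finRange m.length).filter (p ∘ m.get)
      = ((List.finRange u.length).filter (p ∘ u.get)).map f := by
  refine List.Perm.eq_of_pairwise' (r := (· < ·))
    ((List.pairwise_lt_finRange _).filter _) ?_ (filter_finRange_perm_map_of_get_apply f hf p)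
  refine List.pairwise_map.mpr
    (((List.pairwise_lt_finRange _).filter _).imp_of_mem fun {i j} hi hj hij => ?_)
  simp only [List.mem_filter, Function.comp_apply] at hi hj
  exact hmono i j hij hi.2 hj.2

end positions

theorem reorderD.filter_eq {α : Type*} {D : α → α → Prop} {u m : List α}
    (h : reorderD D u m) (p : α → Bool) (hp : ∀ a b, p a → p b → D a b) :
    m.filter p = u.filter p := by
  obtain ⟨f, hf, hord⟩ := h
  have hpos := filter_finRange_eq_map_of_get_apply f hf p
    fun i j hij hi hj => hord i j hij (hp _ _ hi hj)
  rw [List.filter_eq_map_get_filter_finRange, List.filter_eq_map_get_filter_finRange u, hpos,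
    List.map_map]
  exact List.map_congr_left fun i _ => hf i

/-- A dependence-preserving reordering preserves the subsequence of events
of any fixed tag, provided events with equal tags are always dependent. -/
theorem reorder_preserves_tag_subsequence {α Tag : Type*} [DecidableEq Tag]
    (tag : α → Tag) (D : α → α → Prop)
    (hD : ∀ e1 e2, tag e1 = tag e2 → D e1 e2)
    (u m : List α) (h : reorderD D u m) :
    ∀ σ : Tag, m.filter (fun e => tag e = σ) = u.filter (fun e => tag e = σ) :=
  fun _ => h.filter_eq _ fun a b ha hb => hD a b (by simp_all)
end

section
/- Any dependence-preserving reordering of u produces the same result under a sequential fold of updates, up to output multiset, provided condition C3 holds: if m ∈ reorder_D(u), where ¬D(e1,e2) implies that update-applications of e1 and e2 commute with agreeing concatenated outputs (C3), then fold update m init = fold update u init and the output multisets are equal. -/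
theorem Fin.exists_equiv_succ_eq_succAbove {n m : ℕ} (σ : Fin (n + 1) ≃ Fin (m + 1)) :
    ∃ τ : Fin n ≃ Fin m, ∀ j, σ j.succ = (σ 0).succAbove (τ j) := by
  let ρ := (finSuccEquiv n).symm.trans (σ.trans (finSuccEquiv' (σ 0)))
  refine ⟨ρ.removeNone, fun j => ?_⟩
  obtain ⟨y, hy⟩ := Fin.exists_succAbove_eq (σ.injective.ne (Fin.succ_ne_zero j))
  have hρ : ρ (some j) = some y := by simp [ρ, ← hy]
  rw [← hy, Option.some_injective _ ((Equiv.removeNone_some ρ ⟨y, hρ⟩).trans hρ)]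

theorem List.getElem_eraseIdx_succAbove {α : Type*} (a : α) (t : List α) (k : Fin (t.length + 1))
    (j : Fin t.length) (hj : (j : ℕ) < ((a :: t).eraseIdx k).length) :
    ((a :: t).eraseIdx k)[(j : ℕ)] = (a :: t)[(k.succAbove j : ℕ)] := by
  rw [List.getElem_eraseIdx]
  split_ifs with h
  · rw [Fin.succAbove_of_castSucc_lt k j h]; rfl
  · rw [Fin.succAbove_of_le_castSucc k j (not_lt.mp h)]; rfl

section Fold

variable {State Event Out : Type*} (update : State → Event → State)
  (out : State → Event → List Out)

theorem foldSt_append_cons_of_commute {l : List Event} {e : Event}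
    (hcomm : ∀ s, ∀ x ∈ l, update (update s x) e = update (update s e) x) (s : State)
    (r : List Event) : foldSt update s (l ++ e :: r) = foldSt update s (e :: (l ++ r)) := by
  induction l generalizing s with
  | nil => rfl
  | cons x l ih =>
    exact (ih (fun s y hy => hcomm s y (List.mem_cons_of_mem x hy)) (update s x)).trans
      (congrArg (foldSt update · (l ++ r)) (hcomm s x List.mem_cons_self))

theorem foldOut_append_cons_of_commute {l : List Event} {e : Event}
    (hcomm : ∀ s, ∀ x ∈ l, update (update s x) e = update (update s e) x)
    (hout : ∀ s, ∀ x ∈ l, out s x ++ out (update s x) e = out s e ++ out (update s e) x)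
    (s : State) (r : List Event) :
    foldOut update out s (l ++ e :: r) = foldOut update out s (e :: (l ++ r)) := by
  induction l generalizing s with
  | nil => rfl
  | cons x l ih =>
    simp only [List.cons_append, foldOut]
    rw [ih (fun s y hy => hcomm s y (List.mem_cons_of_mem x hy))
      (fun s y hy => hout s y (List.mem_cons_of_mem x hy))]
    simp only [foldOut]
    rw [← List.append_assoc, hout s x List.mem_cons_self, hcomm s x List.mem_cons_self,
      List.append_assoc]

end Fold

namespace reorderD

variable {α : Type*} {D : α → α → Prop}

theorem length_eq {u m : List α} (h : reorderD D u m) : u.length = m.length :=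
  let ⟨f, _⟩ := h
  Fin.equiv_iff_eq.mp ⟨f⟩

theorem exists_append_cons {e : α} {u m : List α} (h : reorderD D (e :: u) m) :
    ∃ l r, m = l ++ e :: r ∧ (∀ x ∈ l, ¬ D e x) ∧ reorderD D u (l ++ r) := by
  obtain ⟨f, hget, hord⟩ := h
  cases m with
  | nil => exact (f 0).elim0
  | cons a t =>
    obtain ⟨τ, hτ⟩ := Fin.exists_equiv_succ_eq_succAbove f
    have hk : (a :: t)[(f 0 : ℕ)] = e := hget 0
    refine ⟨(a :: t).take (f 0), (a :: t).drop (f 0 + 1), ?_, ?_, ?_⟩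
    · rw [← hk, List.getElem_cons_drop, List.take_append_drop]
    · intro x hx hD
      obtain ⟨p, hp, rfl⟩ := List.mem_iff_getElem.mp hx
      rw [List.length_take] at hp
      have hpk : p < f 0 := lt_of_lt_of_le hp (min_le_left _ _)
      set i := f.symm ⟨p, hpk.trans (f 0).isLt⟩
      have hi : (f i : ℕ) = p := by simp [i]
      have hi0 : i ≠ 0 := fun h0 => by rw [h0] at hi; omega
      have hxi : (e :: u).get i = (a :: t)[p] := by rw [← hget i]; simp [hi]
      have := hord 0 i (Fin.pos_iff_ne_zero.mpr hi0) (by rw [hxi]; simpa using hD)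
      omega
    · rw [← List.eraseIdx_eq_take_drop_succ]
      have hlen : ((a :: t).eraseIdx (f 0)).length = t.length :=
        List.length_eraseIdx_of_lt (f 0).isLt
      refine ⟨τ.trans (finCongr hlen.symm), fun j => ?_, fun i j hij hD => ?_⟩
      · simp only [Equiv.trans_apply, finCongr_apply, List.get_eq_getElem, Fin.val_cast]
        rw [List.getElem_eraseIdx_succAbove, ← hτ]
        exact hget j.succ
      · have := hord i.succ j.succ (by simpa) (by simpa)
        rw [hτ, hτ] at this
        simpa using Fin.succAbove_lt_succAbove_iff.mp this

end reorderD

/-- Under (C3) — updates of `D`-independent events commute with agreeing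
concatenated outputs — any dependence-preserving reordering of the input
yields the same final state under the sequential fold, and the same
multiset of outputs. -/
theorem reorder_fold_invariant {State Event Out : Type*}
    (update : State → Event → State) (out : State → Event → List Out)
    (init : State) (D : Event → Event → Prop)
    (hsymm : ∀ e1 e2, D e1 e2 → D e2 e1)
    (hC3 : ∀ (s : State) (e1 e2 : Event), ¬ D e1 e2 →
      update (update s e1) e2 = update (update s e2) e1 ∧
      out s e1 ++ out (update s e1) e2 = out s e2 ++ out (update s e2) e1)
    (u m : List Event) (h : reorderD D u m) :
    foldSt update init m = foldSt update init u ∧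
    (foldOut update out init m : Multiset Out) =
      (foldOut update out init u : Multiset Out) := by
  induction u generalizing m init with
  | nil =>
    obtain rfl : m = [] := List.eq_nil_of_length_eq_zero h.length_eq.symm
    exact ⟨rfl, rfl⟩
  | cons e u ih =>
    obtain ⟨l, r, rfl, hl, hlr⟩ := h.exists_append_cons
    have hindep : ∀ x ∈ l, ¬ D x e := fun x hx hD => hl x hx (hsymm x e hD)
    have hcomm := fun s x hx => (hC3 s x e (hindep x hx)).1
    have hout := fun s x hx => (hC3 s x e (hindep x hx)).2
    obtain ⟨ihSt, ihOut⟩ := ih (update init e) (l ++ r) hlr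
    rw [foldSt_append_cons_of_commute update hcomm,
      foldOut_append_cons_of_commute update out hcomm hout]
    refine ⟨ihSt, ?_⟩
    simp only [foldOut, ← Multiset.coe_add, ihOut]
end

section
/- If m is a dependence-preserving reordering of u and u' is a prefix of u consisting of events that are pairwise dependent with all their successors in u (i.e., the first |u'| events are D-dependent on every later event), then u' is also a prefix of m. -/
/-! A position `i` that every later position must follow under a bijection `e` is fixed by `e`,
once all earlier positions are: `e i < i` would collide with a fixed earlier position, and the
preimage of `i` can be neither earlier (those are fixed) nor later (it would be sent above `e i`). -/

theorem Fin.val_equiv_apply_eq_self_of_apply_lt_apply {n n' : ℕ} (e : Fin n ≃ Fin n') (k : ℕ)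
    (hlt : ∀ i j : Fin n, (i : ℕ) < k → i < j → e i < e j) :
    ∀ i : Fin n, (i : ℕ) < k → (e i : ℕ) = i := by
  obtain rfl : n = n' := Fin.equiv_iff_eq.mp ⟨e⟩
  intro i
  induction i using WellFoundedLT.induction with
  | _ i ih =>
    intro hik
    have not_lt : ¬ (e i : ℕ) < i := fun h => by
      have hfix : e (e i) = e i := Fin.ext (ih (e i) h (h.trans hik))
      exact h.ne (congrArg Fin.val (e.injective hfix))
    have not_gt : ¬ (i : ℕ) < e i := fun h => by
      obtain ⟨p, hep⟩ := e.surjective i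
      rcases lt_trichotomy p i with hpi | rfl | hpi
      · have := ih p hpi (lt_trans hpi hik)
        rw [hep] at this
        exact hpi.ne (Fin.ext this.symm)
      · simp [hep] at h
      · have := hlt i p hik hpi
        rw [hep] at this
        exact not_lt this
    omega

theorem List.IsPrefix.of_equiv_get_eq {α : Type*} {u u' m : List α}
    (e : Fin u.length ≃ Fin m.length) (hget : ∀ i, m.get (e i) = u.get i) (hpre : u' <+: u)
    (hfix : ∀ i : Fin u.length, (i : ℕ) < u'.length → (e i : ℕ) = i) :
    u' <+: m := by
  have hle : u'.length ≤ u.length := hpre.length_le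
  have hlen : u.length = m.length := Fin.equiv_iff_eq.mp ⟨e⟩
  rw [List.prefix_iff_eq_take]
  refine List.ext_getElem (by simp; omega) fun n hn _ => ?_
  have hnu : n < u.length := hn.trans_le hle
  have hfn : e ⟨n, hnu⟩ = ⟨n, hlen ▸ hnu⟩ := Fin.ext (hfix ⟨n, hnu⟩ hn)
  have := hget ⟨n, hnu⟩
  rw [hfn] at this
  simpa [hpre.getElem hn] using this.symm

/-- If `m` is a dependence-preserving reordering of `u` and `u'` is a
prefix of `u` whose events are `D`-dependent on every later event of `u`,
then `u'` is also a prefix of `m`. -/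
theorem reorder_preserves_dependent_prefix {α : Type*}
    (D : α → α → Prop) (u u' m : List α)
    (h : reorderD D u m) (hpre : u' <+: u)
    (hdep : ∀ i j : Fin u.length, (i : ℕ) < u'.length → (i : ℕ) < (j : ℕ) →
      D (u.get i) (u.get j)) :
    u' <+: m := by
  obtain ⟨e, hget, hord⟩ := h
  exact hpre.of_equiv_get_eq e hget <|
    Fin.val_equiv_apply_eq_self_of_apply_lt_apply e _ fun i j hi hij =>
      hord i j hij (hdep i j hi hij)
end
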